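/- Soundness of the negative translation: if A is a theorem of classical second-order tense logic Kt2, then the Gödel–Gentzen translation Aᴺ is a theorem of intuitionistic second-order tense logic IKt2. -/
import Mathlib


namespace SOTense

/-- Formulas of second-order tense logic: propositional symbols, de Bruijn
second-order variables, implication, □, ■, and second-order ∀. -/
inductive Fm : Type where
  | pr : ℕ → Fm
  | var : ℕ → Fm
  | imp : Fm → Fm → Fm
  | box : Fm → Fm
  | bbox : Fm → Fm
  | all : Fm → Fm

namespace Fm

/-- Shift de Bruijn variables ≥ c by one. -/
def lift (c : ℕ) : Fm → Fm
  | pr p => pr p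
  | var n => if n < c then var n else var (n + 1)
  | imp A B => imp (A.lift c) (B.lift c)
  | box A => box (A.lift c)
  | bbox A => bbox (A.lift c)
  | all A => all (A.lift (c + 1))

/-- Substitute C for de Bruijn variable k. -/
def subst : Fm → ℕ → Fm → Fm
  | pr p, _, _ => pr p
  | var n, k, C => if n < k then var n else if n = k then C else var (n - 1)
  | imp A B, k, C => imp (A.subst k C) (B.subst k C)
  | box A, k, C => box (A.subst k C)
  | bbox A, k, C => bbox (A.subst k C)
  | all A, k, C => all (A.subst (k + 1) (C.lift 0))

/-- A[C/X]: instantiate the outermost bound variable of the body A with C. -/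
def inst (A C : Fm) : Fm := A.subst 0 C

/-- The propositional symbol P occurs in the formula. -/
def occursPr (P : ℕ) : Fm → Prop
  | pr p => p = P
  | var _ => False
  | imp A B => A.occursPr P ∨ B.occursPr P
  | box A => A.occursPr P
  | bbox A => A.occursPr P
  | all A => A.occursPr P

/-- ⊥ := ∀X X -/
def bot : Fm := all (var 0)
/-- ¬A := A → ⊥ -/
def neg (A : Fm) : Fm := imp A bot
/-- A ∧ B := ∀X((A → B → X) → X) -/
def conj (A B : Fm) : Fm :=
  all (imp (imp (A.lift 0) (imp (B.lift 0) (var 0))) (var 0))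
/-- A ∨ B := ∀X((A → X) → (B → X) → X) -/
def disj (A B : Fm) : Fm :=
  all (imp (imp (A.lift 0) (var 0)) (imp (imp (B.lift 0) (var 0)) (var 0)))
/-- A ↔ B := (A → B) ∧ (B → A) -/
def iff (A B : Fm) : Fm := conj (imp A B) (imp B A)
/-- ◊A := ∀X(□(A → ■X) → X) -/
def dia (A : Fm) : Fm :=
  all (imp (box (imp (A.lift 0) (bbox (var 0)))) (var 0))
/-- ◆A := ∀X(■(A → □X) → X) -/
def bdia (A : Fm) : Fm :=
  all (imp (bbox (imp (A.lift 0) (box (var 0)))) (var 0))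

end Fm

/-- Hilbert-style provability for second-order tense logic, with defined ◊/◆.
`Prov false` is intuitionistic `IKt2`; `Prov true` is classical `Kt2`
(adding double negation elimination). -/
inductive Prov : Bool → Fm → Prop where
  | axK (cl : Bool) (A B : Fm) : Prov cl (A.imp (B.imp A))
  | axS (cl : Bool) (A B C : Fm) :
      Prov cl ((A.imp (B.imp C)).imp ((A.imp B).imp (A.imp C)))
  | axAllFun (cl : Bool) (A B : Fm) :
      Prov cl ((Fm.all (A.imp B)).imp ((Fm.all A).imp (Fm.all B)))
  | axV (cl : Bool) (A : Fm) : Prov cl (A.imp (Fm.all (A.lift 0)))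
  | axC (cl : Bool) (A C : Fm) : Prov cl ((Fm.all A).imp (A.inst C))
  | mp {cl : Bool} {A B : Fm} : Prov cl (A.imp B) → Prov cl A → Prov cl B
  | gen {cl : Bool} {A : Fm} {P : ℕ} :
      Prov cl (A.inst (Fm.pr P)) → ¬ (Fm.all A).occursPr P → Prov cl (Fm.all A)
  | axBoxFun (cl : Bool) (A B : Fm) :
      Prov cl ((Fm.box (A.imp B)).imp ((Fm.box A).imp (Fm.box B)))
  | axBboxFun (cl : Bool) (A B : Fm) :
      Prov cl ((Fm.bbox (A.imp B)).imp ((Fm.bbox A).imp (Fm.bbox B)))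
  | necBox {cl : Bool} {A : Fm} : Prov cl A → Prov cl (Fm.box A)
  | necBbox {cl : Bool} {A : Fm} : Prov cl A → Prov cl (Fm.bbox A)
  | axTenseBdiaBox (cl : Bool) (A : Fm) : Prov cl ((Fm.bdia (Fm.box A)).imp A)
  | axTenseBoxBdia (cl : Bool) (A : Fm) : Prov cl (A.imp (Fm.box (Fm.bdia A)))
  | axTenseDiaBbox (cl : Bool) (A : Fm) : Prov cl ((Fm.dia (Fm.bbox A)).imp A)
  | axTenseBboxDia (cl : Bool) (A : Fm) : Prov cl (A.imp (Fm.bbox (Fm.dia A)))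
  | axDNE (A : Fm) : Prov true (A.neg.neg.imp A)

/-- Second-order intuitionistic tense logic. -/
def IKt2 (A : Fm) : Prop := Prov false A
/-- Second-order classical tense logic. -/
def Kt2 (A : Fm) : Prop := Prov true A

/-- The Gödel–Gentzen negative translation: double-negate atoms, commute with
→, □, ■ and ∀. -/
def Fm.ntr : Fm → Fm
  | .pr p => (Fm.pr p).neg.neg
  | .var n => (Fm.var n).neg.neg
  | .imp A B => .imp A.ntr B.ntr
  | .box A => .box A.ntr
  | .bbox A => .bbox A.ntr
  | .all A => .all A.ntr
open Fm

namespace Fm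

lemma lift_var_lt {n c : ℕ} (h : n < c) : (var n).lift c = var n := by simp [lift, h]
lemma lift_var_ge {n c : ℕ} (h : c ≤ n) : (var n).lift c = var (n+1) := by
  simp [lift]; omega
lemma subst_var_lt {n k : ℕ} (C : Fm) (h : n < k) : (var n).subst k C = var n := by
  simp [subst, h]
lemma subst_var_eq {k : ℕ} (C : Fm) : (var k).subst k C = C := by simp [subst]
lemma subst_var_gt {n k : ℕ} (C : Fm) (h : k < n) : (var n).subst k C = var (n-1) := by
  rw [subst]; rw [if_neg (by omega), if_neg (by omega)]

lemma bot_lift (c : ℕ) : bot.lift c = bot := by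
  simp [bot, lift]
lemma bot_subst (k : ℕ) (C : Fm) : bot.subst k C = bot := by
  simp [bot, subst]

lemma lift_lift : ∀ (A : Fm) (c d : ℕ), d ≤ c → (A.lift c).lift d = (A.lift d).lift (c+1)
  | pr p, _, _, _ => rfl
  | var n, c, d, h => by
      rcases Nat.lt_or_ge n d with h1 | h1
      · rw [lift_var_lt (show n < c by omega), lift_var_lt h1,
          lift_var_lt (show n < c+1 by omega)]
      · rcases Nat.lt_or_ge n c with h2 | h2
        · rw [lift_var_lt h2, lift_var_ge h1, lift_var_lt (show n+1 < c+1 by omega)]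
        · rw [lift_var_ge h2, lift_var_ge (show d ≤ n+1 by omega), lift_var_ge h1,
            lift_var_ge (show c+1 ≤ n+1 by omega)]
  | imp A B, c, d, h => by simp only [lift, lift_lift A _ _ h, lift_lift B _ _ h]
  | box A, c, d, h => by simp only [lift, lift_lift A _ _ h]
  | bbox A, c, d, h => by simp only [lift, lift_lift A _ _ h]
  | all A, c, d, h => by
      simp only [lift, lift_lift A (c+1) (d+1) (by omega)]

lemma subst_lift_cancel : ∀ (A : Fm) (k : ℕ) (C : Fm), (A.lift k).subst k C = A
  | pr p, _, _ => rfl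
  | var n, k, C => by
      rcases Nat.lt_or_ge n k with h1 | h1
      · rw [lift_var_lt h1, subst_var_lt _ h1]
      · rw [lift_var_ge h1, subst_var_gt _ (by omega)]
        congr 1
  | imp A B, k, C => by simp only [lift, subst, subst_lift_cancel]
  | box A, k, C => by simp only [lift, subst, subst_lift_cancel]
  | bbox A, k, C => by simp only [lift, subst, subst_lift_cancel]
  | all A, k, C => by simp only [lift, subst, subst_lift_cancel]

lemma subst_lift : ∀ (A : Fm) (k c : ℕ) (C : Fm), c ≤ k →
    (A.subst k C).lift c = (A.lift c).subst (k+1) (C.lift c)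
  | pr p, _, _, _, _ => rfl
  | var n, k, c, C, h => by
      rcases Nat.lt_trichotomy n k with h1 | h1 | h1
      · rcases Nat.lt_or_ge n c with h2 | h2
        · rw [subst_var_lt _ h1, lift_var_lt h2, subst_var_lt _ (show n < k+1 by omega)]
        · rw [subst_var_lt _ h1, lift_var_ge h2, subst_var_lt _ (show n+1 < k+1 by omega)]
      · subst h1
        rw [subst_var_eq, lift_var_ge (show c ≤ n by omega), subst_var_eq]
      · rw [subst_var_gt _ h1, lift_var_ge (show c ≤ n-1 by omega),
          lift_var_ge (show c ≤ n by omega), subst_var_gt _ (show k+1 < n+1 by omega)]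
        congr 1
        omega
  | imp A B, k, c, C, h => by
      simp only [subst, lift, subst_lift A _ _ _ h, subst_lift B _ _ _ h]
  | box A, k, c, C, h => by simp only [subst, lift, subst_lift A _ _ _ h]
  | bbox A, k, c, C, h => by simp only [subst, lift, subst_lift A _ _ _ h]
  | all A, k, c, C, h => by
      simp only [subst, lift, subst_lift A (k+1) (c+1) (C.lift 0) (by omega)]
      rw [lift_lift C c 0 (by omega)]

lemma subst_subst : ∀ (A : Fm) (j k : ℕ) (D C : Fm), j ≤ k →
    (A.subst j D).subst k C = (A.subst (k+1) (C.lift j)).subst j (D.subst k C)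
  | pr p, _, _, _, _, _ => rfl
  | var n, j, k, D, C, h => by
      rcases Nat.lt_trichotomy n j with h1 | h1 | h1
      · rw [subst_var_lt _ h1, subst_var_lt _ (show n < k by omega),
          subst_var_lt _ (show n < k+1 by omega), subst_var_lt _ h1]
      · subst h1
        rw [subst_var_eq, subst_var_lt _ (show n < k+1 by omega), subst_var_eq]
      · rcases Nat.lt_trichotomy n (k+1) with h2 | h2 | h2
        · rw [subst_var_gt _ h1, subst_var_lt _ (show n-1 < k by omega),
            subst_var_lt _ h2, subst_var_gt _ h1]
        · subst h2
          rw [subst_var_gt _ h1, Nat.add_sub_cancel, subst_var_eq, subst_var_eq,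
            subst_lift_cancel]
        · rw [subst_var_gt _ h1, subst_var_gt _ (show k < n-1 by omega),
            subst_var_gt _ h2, subst_var_gt _ (show j < n-1 by omega)]
  | imp A B, j, k, D, C, h => by
      simp only [subst, subst_subst A _ _ _ _ h, subst_subst B _ _ _ _ h]
  | box A, j, k, D, C, h => by simp only [subst, subst_subst A _ _ _ _ h]
  | bbox A, j, k, D, C, h => by simp only [subst, subst_subst A _ _ _ _ h]
  | all A, j, k, D, C, h => by
      simp only [subst, subst_subst A (j+1) (k+1) (D.lift 0) (C.lift 0) (by omega)]
      rw [lift_lift C j 0 (by omega), subst_lift D k 0 C (by omega)]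

lemma ntr_lift : ∀ (A : Fm) (c : ℕ), (A.lift c).ntr = A.ntr.lift c
  | pr p, c => by simp [lift, ntr, neg, bot]
  | var n, c => by
      rcases Nat.lt_or_ge n c with h | h
      · simp [lift, ntr, neg, bot, h]
      · simp [lift, ntr, neg, bot, show ¬ n < c by omega]
  | imp A B, c => by simp only [lift, ntr, ntr_lift A, ntr_lift B]
  | box A, c => by simp only [lift, ntr, ntr_lift A]
  | bbox A, c => by simp only [lift, ntr, ntr_lift A]
  | all A, c => by simp only [lift, ntr, ntr_lift A]

lemma ntr_subst_pr : ∀ (A : Fm) (k P : ℕ), (A.subst k (pr P)).ntr = A.ntr.subst k (pr P)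
  | pr p, k, P => by simp [subst, ntr, neg, bot]
  | var n, k, P => by
      rcases Nat.lt_trichotomy n k with h | h | h
      · simp [subst, ntr, neg, bot, h, show n ≠ k by omega]
      · subst h; simp [subst, ntr, neg, bot]
      · simp [subst, ntr, neg, bot, show ¬ n < k by omega, show n ≠ k by omega]
  | imp A B, k, P => by simp only [subst, ntr, ntr_subst_pr A, ntr_subst_pr B]
  | box A, k, P => by simp only [subst, ntr, ntr_subst_pr A]
  | bbox A, k, P => by simp only [subst, ntr, ntr_subst_pr A]
  | all A, k, P => by
      simp only [subst, ntr, lift, ntr_subst_pr A]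

/-- Size of a formula. -/
def fsize : Fm → ℕ
  | pr _ => 1
  | var _ => 1
  | imp A B => A.fsize + B.fsize + 1
  | box A => A.fsize + 1
  | bbox A => A.fsize + 1
  | all A => A.fsize + 1

lemma fsize_subst_pr : ∀ (A : Fm) (k P : ℕ), (A.subst k (pr P)).fsize = A.fsize
  | pr p, _, _ => rfl
  | var n, k, P => by
      rcases Nat.lt_trichotomy n k with h | h | h
      · rw [subst_var_lt _ h]
      · subst h; rw [subst_var_eq]; rfl
      · rw [subst_var_gt _ h]
        rfl
  | imp A B, k, P => by simp only [subst, fsize, fsize_subst_pr A, fsize_subst_pr B]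
  | box A, k, P => by simp only [subst, fsize, fsize_subst_pr A]
  | bbox A, k, P => by simp only [subst, fsize, fsize_subst_pr A]
  | all A, k, P => by simp only [subst, lift, fsize, fsize_subst_pr A]

/-- A bound above all propositional symbols occurring in A. -/
def maxPr : Fm → ℕ
  | pr p => p + 1
  | var _ => 0
  | imp A B => max A.maxPr B.maxPr
  | box A => A.maxPr
  | bbox A => A.maxPr
  | all A => A.maxPr

lemma not_occursPr : ∀ (A : Fm) (P : ℕ), A.maxPr ≤ P → ¬ A.occursPr P
  | pr p, P, h => by simp [maxPr] at h; simp [occursPr]; omega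
  | var n, P, h => by simp [occursPr]
  | imp A B, P, h => by
      simp only [maxPr, max_le_iff] at h
      simp only [occursPr, not_or]
      exact ⟨not_occursPr A P h.1, not_occursPr B P h.2⟩
  | box A, P, h => not_occursPr A P h
  | bbox A, P, h => not_occursPr A P h
  | all A, P, h => not_occursPr A P h

lemma occursPr_ntr : ∀ (A : Fm) (P : ℕ), A.ntr.occursPr P ↔ A.occursPr P
  | pr p, P => by simp [ntr, neg, occursPr, bot]
  | var n, P => by simp [ntr, neg, occursPr, bot]
  | imp A B, P => by simp [ntr, occursPr, occursPr_ntr A, occursPr_ntr B]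
  | box A, P => occursPr_ntr A P
  | bbox A, P => occursPr_ntr A P
  | all A, P => occursPr_ntr A P

end Fm

open Prov

variable {cl : Bool} {A B C D E X Y Z A' B' : Fm}

lemma pconst (h : Prov cl B) : Prov cl (A.imp B) := mp (axK cl B A) h

lemma sC (h : Prov cl (A.imp (B.imp C))) : Prov cl ((A.imp B).imp (A.imp C)) :=
  mp (axS cl A B C) h

lemma prefl : Prov cl (A.imp A) :=
  mp (sC (axK cl A (A.imp A))) (axK cl A A)

lemma psyl (h1 : Prov cl (A.imp B)) (h2 : Prov cl (B.imp C)) : Prov cl (A.imp C) :=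
  mp (sC (pconst h2)) h1

lemma papp2 (h1 : Prov cl (A.imp (B.imp C))) (h2 : Prov cl (A.imp B)) :
    Prov cl (A.imp C) := mp (sC h1) h2

lemma pswap (h : Prov cl (A.imp (B.imp C))) : Prov cl (B.imp (A.imp C)) :=
  psyl (axK cl B A) (sC h)

/-- ⊢ (B → C) → (A → B) → (A → C) -/
lemma pcompThm : Prov cl ((B.imp C).imp ((A.imp B).imp (A.imp C))) :=
  psyl (axK cl (B.imp C) A) (axS cl A B C)

/-- ⊢ (A → B) → (B → C) → (A → C) -/
lemma pcompThm' : Prov cl ((A.imp B).imp ((B.imp C).imp (A.imp C))) :=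
  pswap pcompThm

/-- From ⊢ X, get ⊢ (X → Y) → Y. -/
lemma pappTo (h : Prov cl X) : Prov cl ((X.imp Y).imp Y) :=
  mp (pswap prefl) h

lemma pimpMono (h1 : Prov cl (A'.imp A)) (h2 : Prov cl (B.imp B')) :
    Prov cl ((A.imp B).imp (A'.imp B')) :=
  psyl (mp pcompThm' h1) (mp pcompThm h2)

lemma pdni : Prov cl (A.imp A.neg.neg) := pswap prefl

lemma pcontra (h : Prov cl (A.imp B)) : Prov cl (B.neg.imp A.neg) :=
  pimpMono h prefl

lemma pnnMono (h : Prov cl (A.imp B)) : Prov cl (A.neg.neg.imp B.neg.neg) :=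
  pcontra (pcontra h)

lemma ptripleNeg : Prov cl (A.neg.neg.neg.imp A.neg) := pcontra pdni

lemma pexFalso : Prov cl (Fm.bot.imp C) := by
  have h := axC cl (Fm.var 0) C
  rwa [show (Fm.var 0).inst C = C from Fm.subst_var_eq C] at h

/-- Stability is preserved by implication. -/
lemma pimpStab (h : Prov cl (B.neg.neg.imp B)) :
    Prov cl ((A.imp B).neg.neg.imp (A.imp B)) := by
  -- ⊢ A → ((A→B) → B)
  have h1 : Prov cl (A.imp ((A.imp B).imp B)) := pswap prefl
  -- ⊢ ((A→B)→B) → (¬¬(A→B) → ¬¬B)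
  have h2 : Prov cl (((A.imp B).imp B).imp ((A.imp B).neg.neg.imp B.neg.neg)) :=
    psyl pcompThm' pcompThm'
  -- ⊢ ¬¬(A→B) → (A → ¬¬B)
  have h3 : Prov cl ((A.imp B).neg.neg.imp (A.imp B.neg.neg)) :=
    pswap (psyl h1 h2)
  exact psyl h3 (sC (pconst h))

lemma pboxMono (h : Prov cl (A.imp B)) : Prov cl ((Fm.box A).imp (Fm.box B)) :=
  mp (axBoxFun cl A B) (necBox h)

lemma pbboxMono (h : Prov cl (A.imp B)) : Prov cl ((Fm.bbox A).imp (Fm.bbox B)) :=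
  mp (axBboxFun cl A B) (necBbox h)

lemma pspec (h : Prov cl (Fm.all D)) (C : Fm) : Prov cl (D.inst C) :=
  mp (axC cl D C) h

/-- ∀-introduction with constant antecedent. -/
lemma pallIntro (P : ℕ) (h : Prov cl (X.imp (B.inst (Fm.pr P))))
    (hP : ¬ (Fm.all ((X.lift 0).imp B)).occursPr P) : Prov cl (X.imp (Fm.all B)) := by
  have g : Prov cl (Fm.all ((X.lift 0).imp B)) := by
    refine Prov.gen ?_ hP
    show Prov cl (((X.lift 0).imp B).subst 0 (Fm.pr P))
    show Prov cl (((X.lift 0).subst 0 (Fm.pr P)).imp (B.subst 0 (Fm.pr P)))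
    rwa [Fm.subst_lift_cancel]
  exact psyl (axV cl X) (mp (axAllFun cl (X.lift 0) B) g)

lemma pallImpAll (P : ℕ) (h : Prov cl ((D.inst (Fm.pr P)).imp (E.inst (Fm.pr P))))
    (hP : ¬ (Fm.all (D.imp E)).occursPr P) :
    Prov cl ((Fm.all D).imp (Fm.all E)) := by
  have g : Prov cl (Fm.all (D.imp E)) := Prov.gen h hP
  exact mp (axAllFun cl D E) g

/-- Universal property of ◊. -/
lemma diaUniv (E X : Fm) :
    Prov cl ((Fm.dia E).imp ((Fm.box (E.imp (Fm.bbox X))).imp X)) := by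
  have h := axC cl (Fm.imp (Fm.box (Fm.imp (E.lift 0) (Fm.bbox (Fm.var 0)))) (Fm.var 0)) X
  have e : (Fm.imp (Fm.box (Fm.imp (E.lift 0) (Fm.bbox (Fm.var 0)))) (Fm.var 0)).inst X
      = Fm.imp (Fm.box (E.imp (Fm.bbox X))) X := by
    simp [Fm.inst, Fm.subst, Fm.subst_lift_cancel]
  rw [e] at h
  exact h

/-- Universal property of ◆. -/
lemma bdiaUniv (E X : Fm) :
    Prov cl ((Fm.bdia E).imp ((Fm.bbox (E.imp (Fm.box X))).imp X)) := by
  have h := axC cl (Fm.imp (Fm.bbox (Fm.imp (E.lift 0) (Fm.box (Fm.var 0)))) (Fm.var 0)) X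
  have e : (Fm.imp (Fm.bbox (Fm.imp (E.lift 0) (Fm.box (Fm.var 0)))) (Fm.var 0)).inst X
      = Fm.imp (Fm.bbox (E.imp (Fm.box X))) X := by
    simp [Fm.inst, Fm.subst, Fm.subst_lift_cancel]
  rw [e] at h
  exact h

lemma diaBot : Prov cl ((Fm.dia Fm.bot).imp Fm.bot) :=
  mp (pswap (diaUniv Fm.bot Fm.bot)) (necBox pexFalso)

lemma bdiaBot : Prov cl ((Fm.bdia Fm.bot).imp Fm.bot) :=
  mp (pswap (bdiaUniv Fm.bot Fm.bot)) (necBbox pexFalso)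

/-- K-style: ⊢ □(C→D) → (◊C → ◊D). -/
lemma boxT (C D : Fm) :
    Prov cl ((Fm.box (C.imp D)).imp ((Fm.dia C).imp (Fm.dia D))) := by
  have s1 : Prov cl ((C.imp D).imp (C.imp (Fm.bbox (Fm.dia D)))) :=
    sC (pconst (axTenseBboxDia cl D))
  exact psyl (pboxMono s1) (pswap (diaUniv C (Fm.dia D)))

/-- K-style: ⊢ ■(C→D) → (◆C → ◆D). -/
lemma bboxT (C D : Fm) :
    Prov cl ((Fm.bbox (C.imp D)).imp ((Fm.bdia C).imp (Fm.bdia D))) := by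
  have s1 : Prov cl ((C.imp D).imp (C.imp (Fm.box (Fm.bdia D)))) :=
    sC (pconst (axTenseBoxBdia cl D))
  exact psyl (pbboxMono s1) (pswap (bdiaUniv C (Fm.bdia D)))

/-- Stability propagates through □. -/
lemma pstabBox (h : Prov cl (B.neg.neg.imp B)) :
    Prov cl ((Fm.box B).neg.neg.imp (Fm.box B)) := by
  have T1 : Prov cl ((Fm.box B).imp ((Fm.dia B.neg).imp Fm.bot)) :=
    psyl (psyl (pboxMono pdni) (boxT B.neg Fm.bot)) (mp pcompThm diaBot)
  have s2 : Prov cl (B.neg.imp (Fm.bbox (Fm.box B).neg)) :=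
    psyl (axTenseBboxDia cl B.neg) (pbboxMono (pswap T1))
  have s3 : Prov cl ((Fm.box B).neg.imp ((Fm.box B).neg.neg.imp Fm.bot)) := pswap prefl
  have s4 : Prov cl (B.neg.imp (Fm.bbox ((Fm.box B).neg.neg.imp Fm.bot))) :=
    psyl s2 (pbboxMono s3)
  have s5 : Prov cl (B.neg.imp ((Fm.bdia (Fm.box B).neg.neg).imp Fm.bot)) :=
    psyl s4 (psyl (bboxT (Fm.box B).neg.neg Fm.bot) (mp pcompThm bdiaBot))
  have s6 : Prov cl ((Fm.bdia (Fm.box B).neg.neg).imp B) := psyl (pswap s5) h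
  exact psyl (axTenseBoxBdia cl (Fm.box B).neg.neg) (pboxMono s6)

/-- Stability propagates through ■. -/
lemma pstabBbox (h : Prov cl (B.neg.neg.imp B)) :
    Prov cl ((Fm.bbox B).neg.neg.imp (Fm.bbox B)) := by
  have T1 : Prov cl ((Fm.bbox B).imp ((Fm.bdia B.neg).imp Fm.bot)) :=
    psyl (psyl (pbboxMono pdni) (bboxT B.neg Fm.bot)) (mp pcompThm bdiaBot)
  have s2 : Prov cl (B.neg.imp (Fm.box (Fm.bbox B).neg)) :=
    psyl (axTenseBoxBdia cl B.neg) (pboxMono (pswap T1))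
  have s3 : Prov cl ((Fm.bbox B).neg.imp ((Fm.bbox B).neg.neg.imp Fm.bot)) := pswap prefl
  have s4 : Prov cl (B.neg.imp (Fm.box ((Fm.bbox B).neg.neg.imp Fm.bot))) :=
    psyl s2 (pboxMono s3)
  have s5 : Prov cl (B.neg.imp ((Fm.dia (Fm.bbox B).neg.neg).imp Fm.bot)) :=
    psyl s4 (psyl (boxT (Fm.bbox B).neg.neg Fm.bot) (mp pcompThm diaBot))
  have s6 : Prov cl ((Fm.dia (Fm.bbox B).neg.neg).imp B) := psyl (pswap s5) h
  exact psyl (axTenseBboxDia cl (Fm.bbox B).neg.neg) (pbboxMono s6)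

/-- Stability: ⊢ ¬¬Aᴺ → Aᴺ intuitionistically. -/
lemma stab_aux : ∀ (n : ℕ) (A : Fm), A.fsize ≤ n →
    Prov false (A.ntr.neg.neg.imp A.ntr) := by
  intro n
  induction n with
  | zero =>
      intro A h
      exfalso
      cases A <;> simp [Fm.fsize] at h
  | succ n ih =>
      intro A h
      cases A with
      | pr p => exact ptripleNeg
      | var v => exact ptripleNeg
      | imp A B =>
          have hB := ih B (by simp [Fm.fsize] at h; omega)
          exact pimpStab hB
      | box A => exact pstabBox (ih A (by simp [Fm.fsize] at h; omega))
      | bbox A => exact pstabBbox (ih A (by simp [Fm.fsize] at h; omega))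
      | all B =>
          simp only [Fm.ntr]
          have hfs : B.fsize ≤ n := by simp [Fm.fsize] at h; omega
          set P := Fm.maxPr (Fm.all (((((Fm.all B.ntr).neg.neg)).lift 0).imp B.ntr)) with hPdef
          have e : B.ntr.inst (Fm.pr P) = (B.inst (Fm.pr P)).ntr := by
            simp only [Fm.inst]
            rw [Fm.ntr_subst_pr]
          have hC : Prov false ((Fm.all B.ntr).imp ((B.inst (Fm.pr P)).ntr)) := by
            rw [← e]
            exact axC false B.ntr (Fm.pr P)
          have hs : Prov false (((B.inst (Fm.pr P)).ntr.neg.neg).imp (B.inst (Fm.pr P)).ntr) :=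
            ih (B.inst (Fm.pr P)) (by simp only [Fm.inst]; rw [Fm.fsize_subst_pr]; exact hfs)
          refine pallIntro P ?_ (Fm.not_occursPr _ _ le_rfl)
          rw [e]
          exact psyl (pnnMono hC) hs

lemma stab (A : Fm) : Prov false (A.ntr.neg.neg.imp A.ntr) :=
  stab_aux A.fsize A le_rfl

/-- The negative translation commutes with substitution up to provable
equivalence in IKt2. -/
lemma ntr_subst_aux : ∀ (n : ℕ) (A : Fm), A.fsize ≤ n → ∀ (k : ℕ) (C : Fm),
    Prov false ((A.ntr.subst k C.ntr).imp ((A.subst k C).ntr)) ∧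
    Prov false (((A.subst k C).ntr).imp (A.ntr.subst k C.ntr)) := by
  intro n
  induction n with
  | zero =>
      intro A h
      exfalso
      cases A <;> simp [Fm.fsize] at h
  | succ n ih =>
      intro A h k C
      cases A with
      | pr p =>
          have e : ((Fm.pr p).ntr.subst k C.ntr) = ((Fm.pr p).subst k C).ntr := by
            simp [Fm.ntr, Fm.neg, Fm.subst, Fm.bot]
          rw [e]
          exact ⟨prefl, prefl⟩
      | var v =>
          rcases Nat.lt_trichotomy v k with hv | hv | hv
          · have e : ((Fm.var v).ntr.subst k C.ntr) = ((Fm.var v).subst k C).ntr := by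
              rw [Fm.subst_var_lt _ hv]
              simp [Fm.ntr, Fm.neg, Fm.subst, Fm.bot, hv]
            rw [e]
            exact ⟨prefl, prefl⟩
          · subst hv
            have e1 : ((Fm.var v).ntr.subst v C.ntr) = C.ntr.neg.neg := by
              simp [Fm.ntr, Fm.neg, Fm.subst, Fm.bot]
            have e2 : ((Fm.var v).subst v C).ntr = C.ntr := by
              rw [Fm.subst_var_eq]
            rw [e1, e2]
            exact ⟨stab C, pdni⟩
          · have e : ((Fm.var v).ntr.subst k C.ntr) = ((Fm.var v).subst k C).ntr := by
              rw [Fm.subst_var_gt _ hv]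
              simp [Fm.ntr, Fm.neg, Fm.subst, Fm.bot, show ¬ v < k by omega,
                show v ≠ k by omega]
            rw [e]
            exact ⟨prefl, prefl⟩
      | imp A B =>
          have hA := ih A (by simp [Fm.fsize] at h; omega) k C
          have hB := ih B (by simp [Fm.fsize] at h; omega) k C
          simp only [Fm.ntr, Fm.subst]
          exact ⟨pimpMono hA.2 hB.1, pimpMono hA.1 hB.2⟩
      | box A =>
          have hA := ih A (by simp [Fm.fsize] at h; omega) k C
          simp only [Fm.ntr, Fm.subst]
          exact ⟨pboxMono hA.1, pboxMono hA.2⟩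
      | bbox A =>
          have hA := ih A (by simp [Fm.fsize] at h; omega) k C
          simp only [Fm.ntr, Fm.subst]
          exact ⟨pbboxMono hA.1, pbboxMono hA.2⟩
      | all B =>
          have hfs : B.fsize ≤ n := by simp [Fm.fsize] at h; omega
          simp only [Fm.ntr, Fm.subst]
          have eD : ∀ P : ℕ, (B.ntr.subst (k+1) (C.ntr.lift 0)).inst (Fm.pr P)
              = ((B.subst 0 (Fm.pr P)).ntr).subst k C.ntr := by
            intro P
            have hss := Fm.subst_subst B.ntr 0 k (Fm.pr P) C.ntr (Nat.zero_le k)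
            rw [show (Fm.pr P).subst k C.ntr = Fm.pr P from rfl] at hss
            simp only [Fm.inst]
            rw [← hss, ← Fm.ntr_subst_pr]
          have eD' : ∀ P : ℕ, ((B.subst (k+1) (C.lift 0)).ntr).inst (Fm.pr P)
              = ((B.subst 0 (Fm.pr P)).subst k C).ntr := by
            intro P
            simp only [Fm.inst]
            rw [← Fm.ntr_subst_pr]
            congr 1
            have hss := Fm.subst_subst B 0 k (Fm.pr P) C (Nat.zero_le k)
            rw [show (Fm.pr P).subst k C = Fm.pr P from rfl] at hss
            exact hss.symm
          have ihP : ∀ P : ℕ,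
              Prov false ((((B.subst 0 (Fm.pr P)).ntr).subst k C.ntr).imp
                (((B.subst 0 (Fm.pr P)).subst k C).ntr)) ∧
              Prov false ((((B.subst 0 (Fm.pr P)).subst k C).ntr).imp
                (((B.subst 0 (Fm.pr P)).ntr).subst k C.ntr)) := fun P =>
            ih (B.subst 0 (Fm.pr P)) (by rw [Fm.fsize_subst_pr]; exact hfs) k C
          constructor
          · exact pallImpAll
              (Fm.maxPr (Fm.all ((B.ntr.subst (k+1) (C.ntr.lift 0)).imp
                ((B.subst (k+1) (C.lift 0)).ntr))))
              (by rw [eD, eD']; exact (ihP _).1) (Fm.not_occursPr _ _ le_rfl)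
          · exact pallImpAll
              (Fm.maxPr (Fm.all (((B.subst (k+1) (C.lift 0)).ntr).imp
                (B.ntr.subst (k+1) (C.ntr.lift 0)))))
              (by rw [eD, eD']; exact (ihP _).2) (Fm.not_occursPr _ _ le_rfl)

lemma ntr_inst (A C : Fm) :
    Prov false ((A.ntr.inst C.ntr).imp ((A.inst C).ntr)) :=
  (ntr_subst_aux A.fsize A le_rfl 0 C).1

/-- The shape of the negative translation of ◊. -/
def diaN (E : Fm) : Fm :=
  Fm.all (Fm.imp (Fm.box (Fm.imp (E.lift 0) (Fm.bbox ((Fm.var 0).neg.neg))))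
    ((Fm.var 0).neg.neg))

/-- The shape of the negative translation of ◆. -/
def bdiaN (E : Fm) : Fm :=
  Fm.all (Fm.imp (Fm.bbox (Fm.imp (E.lift 0) (Fm.box ((Fm.var 0).neg.neg))))
    ((Fm.var 0).neg.neg))

lemma ntr_dia (A : Fm) : (Fm.dia A).ntr = diaN A.ntr := by
  simp only [Fm.dia, diaN, Fm.ntr, Fm.ntr_lift]

lemma ntr_bdia (A : Fm) : (Fm.bdia A).ntr = bdiaN A.ntr := by
  simp only [Fm.bdia, bdiaN, Fm.ntr, Fm.ntr_lift]

lemma diaN_inst (E X : Fm) :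
    (Fm.imp (Fm.box (Fm.imp (E.lift 0) (Fm.bbox ((Fm.var 0).neg.neg))))
      ((Fm.var 0).neg.neg)).inst X
    = Fm.imp (Fm.box (E.imp (Fm.bbox X.neg.neg))) X.neg.neg := by
  simp [Fm.inst, Fm.subst, Fm.neg, Fm.bot, Fm.subst_lift_cancel]

lemma bdiaN_inst (E X : Fm) :
    (Fm.imp (Fm.bbox (Fm.imp (E.lift 0) (Fm.box ((Fm.var 0).neg.neg))))
      ((Fm.var 0).neg.neg)).inst X
    = Fm.imp (Fm.bbox (E.imp (Fm.box X.neg.neg))) X.neg.neg := by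
  simp [Fm.inst, Fm.subst, Fm.neg, Fm.bot, Fm.subst_lift_cancel]

lemma diaN_univ (E X : Fm) :
    Prov cl ((diaN E).imp ((Fm.box (E.imp (Fm.bbox X.neg.neg))).imp X.neg.neg)) := by
  have h := axC cl (Fm.imp (Fm.box (Fm.imp (E.lift 0) (Fm.bbox ((Fm.var 0).neg.neg))))
    ((Fm.var 0).neg.neg)) X
  rw [diaN_inst] at h
  exact h

lemma bdiaN_univ (E X : Fm) :
    Prov cl ((bdiaN E).imp ((Fm.bbox (E.imp (Fm.box X.neg.neg))).imp X.neg.neg)) := by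
  have h := axC cl (Fm.imp (Fm.bbox (Fm.imp (E.lift 0) (Fm.box ((Fm.var 0).neg.neg))))
    ((Fm.var 0).neg.neg)) X
  rw [bdiaN_inst] at h
  exact h

lemma dia_to_diaN (E : Fm) : Prov cl ((Fm.dia E).imp (diaN E)) := by
  refine pallIntro (Fm.maxPr (Fm.all (((Fm.dia E).lift 0).imp
      (Fm.imp (Fm.box (Fm.imp (E.lift 0) (Fm.bbox ((Fm.var 0).neg.neg))))
        ((Fm.var 0).neg.neg))))) ?_ (Fm.not_occursPr _ _ le_rfl)
  rw [diaN_inst]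
  exact diaUniv E ((Fm.pr _).neg.neg)

lemma bdia_to_bdiaN (E : Fm) : Prov cl ((Fm.bdia E).imp (bdiaN E)) := by
  refine pallIntro (Fm.maxPr (Fm.all (((Fm.bdia E).lift 0).imp
      (Fm.imp (Fm.bbox (Fm.imp (E.lift 0) (Fm.box ((Fm.var 0).neg.neg))))
        ((Fm.var 0).neg.neg))))) ?_ (Fm.not_occursPr _ _ le_rfl)
  rw [bdiaN_inst]
  exact bdiaUniv E ((Fm.pr _).neg.neg)

lemma botN_to_bot : Prov cl (Fm.bot.ntr.imp Fm.bot) := by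
  have h := axC cl ((Fm.var 0).neg.neg) Fm.bot
  have e : ((Fm.var 0).neg.neg).inst Fm.bot = (Fm.bot.imp Fm.bot).imp Fm.bot := by
    simp [Fm.inst, Fm.subst, Fm.neg, Fm.bot]
  rw [e] at h
  exact psyl h (pappTo prefl)

lemma bot_to_botN : Prov cl (Fm.bot.imp Fm.bot.ntr) := pexFalso

/-- Main lemma: any provable formula has intuitionistically provable
negative translation. -/
lemma ntr_prov {b : Bool} {A : Fm} (h : Prov b A) : Prov false A.ntr := by
  induction h with
  | axK cl A B => exact axK false A.ntr B.ntr
  | axS cl A B C => exact axS false A.ntr B.ntr C.ntr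
  | axAllFun cl A B => exact axAllFun false A.ntr B.ntr
  | axV cl A =>
      show Prov false (A.ntr.imp (Fm.all ((A.lift 0).ntr)))
      rw [Fm.ntr_lift]
      exact axV false A.ntr
  | axC cl A C =>
      show Prov false ((Fm.all A.ntr).imp ((A.inst C).ntr))
      exact psyl (axC false A.ntr C.ntr) (ntr_inst A C)
  | mp h1 h2 ih1 ih2 => exact mp ih1 ih2
  | gen h1 hP ih =>
      rename_i cl2 A2 P2
      show Prov false (Fm.all A2.ntr)
      refine Prov.gen (P := P2) ?_ ?_
      · have e : A2.ntr.inst (Fm.pr P2) = (A2.inst (Fm.pr P2)).ntr := by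
          simp only [Fm.inst]
          rw [Fm.ntr_subst_pr]
        rw [e]
        exact ih
      · intro hc
        exact hP ((Fm.occursPr_ntr A2 P2).mp hc)
  | axBoxFun cl A B => exact axBoxFun false A.ntr B.ntr
  | axBboxFun cl A B => exact axBboxFun false A.ntr B.ntr
  | necBox h1 ih => exact necBox ih
  | necBbox h1 ih => exact necBbox ih
  | axTenseBdiaBox cl A =>
      have e : ((Fm.bdia (Fm.box A)).imp A).ntr = (bdiaN (Fm.box A.ntr)).imp A.ntr := by
        show ((Fm.bdia (Fm.box A)).ntr).imp A.ntr = _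
        rw [ntr_bdia]
        rfl
      rw [e]
      have h1 := bdiaN_univ (cl := false) (Fm.box A.ntr) A.ntr
      have h2 : Prov false (Fm.bbox ((Fm.box A.ntr).imp (Fm.box A.ntr.neg.neg))) :=
        necBbox (pboxMono pdni)
      exact psyl (mp (pswap h1) h2) (stab A)
  | axTenseBoxBdia cl A =>
      have e : (A.imp (Fm.box (Fm.bdia A))).ntr = A.ntr.imp (Fm.box (bdiaN A.ntr)) := by
        show A.ntr.imp (Fm.box ((Fm.bdia A).ntr)) = _
        rw [ntr_bdia]
      rw [e]
      exact psyl (axTenseBoxBdia false A.ntr) (pboxMono (bdia_to_bdiaN A.ntr))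
  | axTenseDiaBbox cl A =>
      have e : ((Fm.dia (Fm.bbox A)).imp A).ntr = (diaN (Fm.bbox A.ntr)).imp A.ntr := by
        show ((Fm.dia (Fm.bbox A)).ntr).imp A.ntr = _
        rw [ntr_dia]
        rfl
      rw [e]
      have h1 := diaN_univ (cl := false) (Fm.bbox A.ntr) A.ntr
      have h2 : Prov false (Fm.box ((Fm.bbox A.ntr).imp (Fm.bbox A.ntr.neg.neg))) :=
        necBox (pbboxMono pdni)
      exact psyl (mp (pswap h1) h2) (stab A)
  | axTenseBboxDia cl A =>
      have e : (A.imp (Fm.bbox (Fm.dia A))).ntr = A.ntr.imp (Fm.bbox (diaN A.ntr)) := by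
        show A.ntr.imp (Fm.bbox ((Fm.dia A).ntr)) = _
        rw [ntr_dia]
      rw [e]
      exact psyl (axTenseBboxDia false A.ntr) (pbboxMono (dia_to_diaN A.ntr))
  | axDNE A =>
      show Prov false (((A.ntr.imp Fm.bot.ntr).imp Fm.bot.ntr).imp A.ntr)
      have i1 : Prov false ((A.ntr.neg).imp (A.ntr.imp Fm.bot.ntr)) :=
        mp pcompThm bot_to_botN
      have i2 : Prov false (((A.ntr.imp Fm.bot.ntr).imp Fm.bot.ntr).imp A.ntr.neg.neg) :=
        pimpMono i1 botN_to_bot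
      exact psyl i2 (stab A)

/-- Soundness of the Gödel–Gentzen negative translation: if A is a theorem of
classical second-order tense logic Kt2 then Aᴺ is a theorem of IKt2. -/
theorem ntr_sound (A : Fm) (h : Kt2 A) : IKt2 A.ntr :=
  ntr_prov h

end SOTense
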